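/- arXiv:1910.01890 — 2 statements merged into one kernel-verified Lean document; each statement's English description precedes it below -/
import Mathlib

section
/- Assume the two-strain SI model hypotheses. If R_0^x > 1 ≥ R_0^y, then the set of equilibria of the two-strain SI system is exactly {E_0, E_1}, where E_0 = (Λ/μ_S, 0, 0) and E_1 = (1/r_x, a ↦ (μ_S(R_0^x − 1)/r_x)·π_x(a), 0). -/
/-!
Each infected class solves `x' = -μ x`, so it is `x 0 · π`, and its renewal condition becomes
`x 0 = S · x 0 · r`: either the strain is absent or it pins `S = 1 / r`. For the strain with
`Λ r_y ≤ μ_S` the second option contradicts the balance law `Λ = μ_S S + x 0 + y 0`; for the other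
strain the balance law determines `x 0` once `S = 1 / r_x`.
-/

open MeasureTheory Real Set

/-- Survival probability `π(a) = exp(-∫_0^a μ)`. -/
noncomputable def survival (μ : ℝ → ℝ) (a : ℝ) : ℝ :=
  Real.exp (-(∫ s in (0:ℝ)..a, μ s))

/-- An equilibrium of the two-strain infection-age structured SI system:
`S ≥ 0`, `x, y ≥ 0` are continuously differentiable on `[0,∞)` with
`x' = -μₓ x`, `y' = -μ_y y`, renewal boundary conditions
`x 0 = S ∫ βₓ x`, `y 0 = S ∫ β_y y`, and the balance `Λ = μ_S S + x 0 + y 0`. -/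
def IsEquilibrium (Λ μS : ℝ) (μx μy βx βy : ℝ → ℝ)
    (S : ℝ) (x y : ℝ → ℝ) : Prop :=
  0 ≤ S ∧ (∀ a, 0 ≤ a → 0 ≤ x a) ∧ (∀ a, 0 ≤ a → 0 ≤ y a) ∧
  (∀ a, 0 ≤ a → HasDerivWithinAt x (-(μx a) * x a) (Ici 0) a) ∧
  (∀ a, 0 ≤ a → HasDerivWithinAt y (-(μy a) * y a) (Ici 0) a) ∧
  x 0 = S * ∫ a in Ici (0:ℝ), βx a * x a ∧
  y 0 = S * ∫ a in Ici (0:ℝ), βy a * y a ∧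
  Λ = μS * S + x 0 + y 0

section Survival

variable {μ : ℝ → ℝ}

@[simp]
theorem survival_zero : survival μ 0 = 1 := by simp [survival]

theorem survival_pos (a : ℝ) : 0 < survival μ a := exp_pos _

/-- Extending `μ` by `μ 0` to the left makes it continuous on all of `ℝ`, so the
fundamental theorem of calculus applies. -/
theorem hasDerivWithinAt_integral_of_continuousOn_Ici (hμ : ContinuousOn μ (Ici 0))
    {a : ℝ} (ha : 0 ≤ a) :
    HasDerivWithinAt (fun u => ∫ s in (0:ℝ)..u, μ s) (μ a) (Ici 0) a := by
  set ν : ℝ → ℝ := fun s => μ (max s 0)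
  have hν : Continuous ν :=
    hμ.comp_continuous (continuous_id.max continuous_const) fun s => le_max_right s 0
  have hνμ : ∀ {s : ℝ}, 0 ≤ s → ν s = μ s := fun hs => by simp only [ν, max_eq_left hs]
  have hint : ∀ u ∈ Ici (0:ℝ), ∫ s in (0:ℝ)..u, μ s = ∫ s in (0:ℝ)..u, ν s :=
    fun u hu => intervalIntegral.integral_congr fun s hs =>
      (hνμ (uIcc_of_le (mem_Ici.1 hu) ▸ hs).1).symm
  have hderiv := (hν.integral_hasStrictDerivAt 0 a).hasDerivAt.hasDerivWithinAt (s := Ici 0)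
  rw [← hνμ ha]
  exact hderiv.congr hint (hint a ha)

theorem hasDerivWithinAt_survival (hμ : ContinuousOn μ (Ici 0)) {a : ℝ} (ha : 0 ≤ a) :
    HasDerivWithinAt (survival μ) (-(μ a) * survival μ a) (Ici 0) a := by
  have h := (hasDerivWithinAt_integral_of_continuousOn_Ici hμ ha).neg.exp
  exact h.congr_deriv (by simp only [Pi.neg_apply, survival]; ring)

/-- The quotient `x / π` has zero right derivative on `[0, ∞)`. -/
theorem eq_mul_survival_of_hasDerivWithinAt (hμ : ContinuousOn μ (Ici 0)) {x : ℝ → ℝ}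
    (hx : ∀ a, 0 ≤ a → HasDerivWithinAt x (-(μ a) * x a) (Ici 0) a) {b : ℝ} (hb : 0 ≤ b) :
    x b = x 0 * survival μ b := by
  have hquot : ∀ a, 0 ≤ a →
      HasDerivWithinAt (fun u => x u / survival μ u) 0 (Ici 0) a := fun a ha =>
    ((hx a ha).div (hasDerivWithinAt_survival hμ ha) (survival_pos a).ne').congr_deriv
      (by ring)
  have hconst := constant_of_has_deriv_right_zero (a := 0) (b := b)
    (fun a ha => (hquot a ha.1).continuousWithinAt.mono fun u hu => hu.1)
    (fun a ha => (hquot a ha.1).mono (Ici_subset_Ici.2 ha.1)) b ⟨hb, le_rfl⟩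
  rw [survival_zero, div_one, div_eq_iff (survival_pos b).ne'] at hconst
  exact hconst

theorem setIntegral_mul_eq_of_eq_mul_survival {β x : ℝ → ℝ}
    (hx : ∀ a, 0 ≤ a → x a = x 0 * survival μ a) :
    ∫ a in Ici (0:ℝ), β a * x a = x 0 * ∫ a in Ici (0:ℝ), β a * survival μ a := by
  rw [← integral_const_mul]
  refine setIntegral_congr_fun measurableSet_Ici fun a ha => ?_
  rw [hx a ha]
  ring

end Survival

section Equilibria

variable {Λ μS : ℝ} {μx μy βx βy : ℝ → ℝ}

theorem isEquilibrium_disease_free {S : ℝ} (hS : 0 ≤ S) (hΛ : Λ = μS * S) :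
    IsEquilibrium Λ μS μx μy βx βy S (fun _ => 0) (fun _ => 0) := by
  refine ⟨hS, fun _ _ => le_rfl, fun _ _ => le_rfl, fun a _ => ?_, fun a _ => ?_, by simp,
    by simp, by simp [hΛ]⟩ <;> simpa using hasDerivWithinAt_const a (Ici (0:ℝ)) (0:ℝ)

theorem isEquilibrium_single_strain (hμx : ContinuousOn μx (Ici 0)) {S c : ℝ}
    (hS : 0 ≤ S) (hc : 0 ≤ c) (hSr : S * ∫ a in Ici (0:ℝ), βx a * survival μx a = 1)
    (hΛ : Λ = μS * S + c) :
    IsEquilibrium Λ μS μx μy βx βy S (fun a => c * survival μx a) (fun _ => 0) := by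
  have hcπ : ∀ a, 0 ≤ a → c * survival μx a = c * survival μx 0 * survival μx a :=
    fun a _ => by rw [survival_zero, mul_one]
  refine ⟨hS, fun a _ => mul_nonneg hc (survival_pos a).le, fun _ _ => le_rfl,
    fun a ha => ?_, fun a _ => ?_, ?_, by simp, ?_⟩
  · exact ((hasDerivWithinAt_survival hμx ha).const_mul c).congr_deriv (by ring)
  · simpa using hasDerivWithinAt_const a (Ici (0:ℝ)) (0:ℝ)
  all_goals beta_reduce
  · rw [setIntegral_mul_eq_of_eq_mul_survival hcπ, survival_zero, mul_one, mul_left_comm,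
      hSr, mul_one]
  · rw [survival_zero, mul_one, add_zero, hΛ]

/-- If `y0 ≠ 0`, the renewal condition forces `S r = 1`, and then the balance gives
`Λ r > μS S r = μS`. -/
theorem eq_zero_of_renewal_of_mul_le {S x0 y0 r : ℝ} (hS : 0 ≤ S) (hx0 : 0 ≤ x0)
    (hy0 : 0 ≤ y0) (hren : y0 = S * (y0 * r)) (hbal : Λ = μS * S + x0 + y0)
    (hR : Λ * r ≤ μS) : y0 = 0 := by
  by_contra hne
  have hSr : S * r = 1 := by
    have : y0 * (S * r - 1) = 0 := by linear_combination -hren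
    linarith [(mul_eq_zero.1 this).resolve_left hne]
  have hr : 0 < r := pos_of_mul_pos_right (hSr ▸ one_pos) hS
  have hy0r : 0 < y0 * r := mul_pos (lt_of_le_of_ne hy0 (Ne.symm hne)) hr
  have hΛr : Λ * r = μS + x0 * r + y0 * r := by rw [hbal]; linear_combination μS * hSr
  linarith [mul_nonneg hx0 hr.le]

end Equilibria

/-- **If `R₀ˣ > 1 ≥ R₀ʸ`, the set of equilibria of the two-strain SI system
is exactly `{E₀, E₁}`.** -/
theorem equilibria_E0_E1 (Λ μS : ℝ) (μx μy βx βy : ℝ → ℝ)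
    (hΛ : 0 < Λ) (hμS : 0 < μS)
    (hμxc : ContinuousOn μx (Ici 0)) (hμyc : ContinuousOn μy (Ici 0))
    (rx ry : ℝ)
    (hrx : rx = ∫ a in Ici (0:ℝ), βx a * survival μx a)
    (hry : ry = ∫ a in Ici (0:ℝ), βy a * survival μy a)
    (hrxpos : 0 < rx)
    (R0x R0y : ℝ) (hR0x : R0x = Λ * rx / μS) (hR0y : R0y = Λ * ry / μS)
    (R0x R0y : ℝ) (hR0x : R0x = Λ * rx / μS) (hR0y : R0y = Λ * ry / μS)
    (hRx : 1 < R0x) (hRy : R0y ≤ 1) :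
    IsEquilibrium Λ μS μx μy βx βy (Λ / μS) (fun _ => 0) (fun _ => 0) ∧
    IsEquilibrium Λ μS μx μy βx βy (1 / rx)
      (fun a => μS * (R0x - 1) / rx * survival μx a) (fun _ => 0) ∧
    ∀ S x y, IsEquilibrium Λ μS μx μy βx βy S x y →
      (S = Λ / μS ∧ (∀ a, 0 ≤ a → x a = 0) ∧ (∀ a, 0 ≤ a → y a = 0)) ∨
      (S = 1 / rx ∧ (∀ a, 0 ≤ a → x a = μS * (R0x - 1) / rx * survival μx a) ∧
        (∀ a, 0 ≤ a → y a = 0)) := by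
  have hx1 : μS * (R0x - 1) / rx = Λ - μS / rx := by rw [hR0x]; field_simp
  refine ⟨isEquilibrium_disease_free (by positivity) (by field_simp),
    isEquilibrium_single_strain hμxc (by positivity)
      (div_nonneg (mul_nonneg hμS.le (by linarith)) hrxpos.le) (by rw [← hrx]; field_simp)
      (by rw [hx1]; field_simp; ring), ?_⟩
  rintro S x y ⟨hS, hx, hy, hxd, hyd, hxren, hyren, hbal⟩
  have hxπ : ∀ a, 0 ≤ a → x a = x 0 * survival μx a :=
    fun _ => eq_mul_survival_of_hasDerivWithinAt hμxc hxd
  have hyπ : ∀ a, 0 ≤ a → y a = y 0 * survival μy a :=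
    fun _ => eq_mul_survival_of_hasDerivWithinAt hμyc hyd
  rw [setIntegral_mul_eq_of_eq_mul_survival hxπ, ← hrx] at hxren
  rw [setIntegral_mul_eq_of_eq_mul_survival hyπ, ← hry] at hyren
  have hy0 : y 0 = 0 := eq_zero_of_renewal_of_mul_le hS (hx 0 le_rfl) (hy 0 le_rfl) hyren hbal
    (by rwa [hR0y, div_le_one hμS] at hRy)
  have hy_zero : ∀ a, 0 ≤ a → y a = 0 := fun a ha => by rw [hyπ a ha, hy0, zero_mul]
  have hx0 : x 0 * (S * rx - 1) = 0 := by linear_combination -hxren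
  rcases mul_eq_zero.1 hx0 with hx0 | hSrx
  · refine .inl ⟨?_, fun a ha => by rw [hxπ a ha, hx0, zero_mul], hy_zero⟩
    rw [eq_div_iff hμS.ne']
    linarith
  · have hS1 : S = 1 / rx := by rw [eq_div_iff hrxpos.ne']; linarith
    refine .inr ⟨hS1, fun a ha => ?_, hy_zero⟩
    rw [hxπ a ha, hx1]
    congr 1
    rw [hS1, mul_one_div] at hbal
    linarith
end

section
/- Let c > 0, k > 0, let μ, β : [0,c] → [0,∞) be continuous, assume there exists b̲ ∈ [0,c) with β(a) > 0 for all a ∈ [b̲, c), and assume that k·∫_0^c β(a)·exp(−∫_0^a μ(s) ds) da > 1. Let v : [0,∞)×[0,c] → [0,∞) be continuously differentiable and satisfy ∂_t v(t,a) + ∂_a v(t,a) = −μ(a)·v(t,a) for all t ≥ 0 and a ∈ [0,c], v(t,0) = k·∫_0^c β(a)·v(t,a) da for all t ≥ 0, and v(0,·) = v_0 with v_0 not identically zero. Then ∫_0^c v(t,a) da → ∞ as t → ∞. -/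
/-!
Let `r > 0` be the Malthusian parameter, the root of the Euler–Lotka equation
`k ∫₀ᶜ β(a) π(a) e^{-ra} da = 1`; it exists because the left side is continuous in `r`, exceeds `1`
at `r = 0` and tends to `0` as `r → ∞`. The reproductive value `φ` solves the adjoint equation
`φ' = (μ + r) φ - k β` with `φ(0) = 1`, `φ(c) = 0`. Integrating the transport equation against `φ`
by parts and using the renewal condition gives `Q' = r Q` for `Q(t) = ∫₀ᶜ φ(a) v(t,a) da`, so
`Q(t) = Q(0) e^{rt}`. Since `β > 0` near `c`, `φ > 0` on `[0, c)`, whence `Q(0) > 0`; and as `φ`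
is bounded, `∫₀ᶜ v(t,·) ≥ Q(t) / max φ → ∞`.
-/

open MeasureTheory Real Set Filter intervalIntegral Function
open scoped Interval Topology

lemma exists_mem_Ioo_pos_of_continuousOn {f : ℝ → ℝ} {a b x₀ : ℝ} (hab : a < b)
    (hf : ContinuousOn f (Icc a b)) (hx₀ : x₀ ∈ Icc a b) (hpos : 0 < f x₀) :
    ∃ x ∈ Ioo a b, 0 < f x := by
  have : (𝓝[Ioo a b] x₀).NeBot :=
    mem_closure_iff_nhdsWithin_neBot.1 (by rwa [closure_Ioo hab.ne])
  have hev : ∀ᶠ x in 𝓝[Ioo a b] x₀, 0 < f x :=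
    nhdsWithin_mono _ Ioo_subset_Icc_self ((hf x₀ hx₀).eventually_const_lt hpos)
  exact (eventually_mem_nhdsWithin.and hev).exists

lemma intervalIntegral_pos_of_continuousOn {f : ℝ → ℝ} {a b x₀ : ℝ} (hab : a < b)
    (hf : ContinuousOn f (Icc a b)) (hnn : ∀ x ∈ Icc a b, 0 ≤ f x) (hx₀ : x₀ ∈ Icc a b)
    (hpos : 0 < f x₀) : 0 < ∫ x in a..b, f x := by
  obtain ⟨x₁, hx₁, hfx₁⟩ := exists_mem_Ioo_pos_of_continuousOn hab hf hx₀ hpos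
  have hU : IsOpen (Ioo a b ∩ f ⁻¹' Ioi 0) :=
    (hf.mono Ioo_subset_Icc_self).isOpen_inter_preimage isOpen_Ioo isOpen_Ioi
  have hf_nonneg : 0 ≤ᵐ[volume.restrict (Ι a b)] f := by
    rw [uIoc_of_le hab.le, EventuallyLE, ae_restrict_iff' measurableSet_Ioc]
    exact Eventually.of_forall fun x hx => hnn x (Ioc_subset_Icc_self hx)
  rw [integral_pos_iff_support_of_nonneg_ae' hf_nonneg (hf.intervalIntegrable_of_Icc hab.le)]
  refine ⟨hab, (hU.measure_pos volume ⟨x₁, hx₁, hfx₁⟩).trans_le (measure_mono ?_)⟩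
  rintro x ⟨hx, hfx⟩
  exact ⟨hfx.ne', Ioo_subset_Ioc_self hx⟩

lemma intervalIntegral_mul_pos_of_continuousOn {φ u : ℝ → ℝ} {a b x₀ : ℝ} (hab : a < b)
    (hφ : ContinuousOn φ (Icc a b)) (hu : ContinuousOn u (Icc a b))
    (hφnn : ∀ x ∈ Icc a b, 0 ≤ φ x) (hφpos : ∀ x ∈ Ioo a b, 0 < φ x)
    (hunn : ∀ x ∈ Icc a b, 0 ≤ u x) (hx₀ : x₀ ∈ Icc a b) (hux₀ : 0 < u x₀) :
    0 < ∫ x in a..b, φ x * u x := by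
  obtain ⟨x₁, hx₁, hux₁⟩ := exists_mem_Ioo_pos_of_continuousOn hab hu hx₀ hux₀
  exact intervalIntegral_pos_of_continuousOn hab (hφ.mul hu)
    (fun x hx => mul_nonneg (hφnn x hx) (hunn x hx)) (Ioo_subset_Icc_self hx₁)
    (mul_pos (hφpos x₁ hx₁) hux₁)

lemma exists_pos_integral_mul_le_mul_integral {φ : ℝ → ℝ} {a b : ℝ} (hab : a ≤ b)
    (hφ : ContinuousOn φ (Icc a b)) :
    ∃ M > 0, ∀ u : ℝ → ℝ, ContinuousOn u (Icc a b) → (∀ x ∈ Icc a b, 0 ≤ u x) →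
      ∫ x in a..b, φ x * u x ≤ M * ∫ x in a..b, u x := by
  obtain ⟨M, hM⟩ := isCompact_Icc.exists_bound_of_continuousOn hφ
  refine ⟨max M 1, by positivity, fun u hu hunn => ?_⟩
  rw [← intervalIntegral.integral_const_mul]
  exact integral_mono_on hab ((hφ.mul hu).intervalIntegrable_of_Icc hab)
    ((continuousOn_const.mul hu).intervalIntegrable_of_Icc hab) fun x hx =>
      mul_le_mul_of_nonneg_right ((le_abs_self _).trans ((hM x hx).trans (le_max_left _ _)))
        (hunn x hx)

lemma continuousOn_integral_right_of_continuousOn {f : ℝ → ℝ} {a b : ℝ} (hab : a ≤ b)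
    (hf : ContinuousOn f (Icc a b)) : ContinuousOn (fun x => ∫ t in a..x, f t) (Icc a b) := by
  rw [← uIcc_of_le hab] at hf ⊢
  exact continuousOn_primitive_interval (hf.integrableOn_compact isCompact_uIcc)

lemma continuousOn_integral_left_of_continuousOn {f : ℝ → ℝ} {a b : ℝ} (hab : a ≤ b)
    (hf : ContinuousOn f (Icc a b)) : ContinuousOn (fun x => ∫ t in x..b, f t) (Icc a b) := by
  rw [← uIcc_of_le hab] at hf ⊢
  exact continuousOn_primitive_interval_left (hf.integrableOn_compact isCompact_uIcc)

lemma hasDerivAt_integral_right_of_continuousOn {f : ℝ → ℝ} {a b x : ℝ}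
    (hf : ContinuousOn f (Icc a b)) (hx : x ∈ Ioo a b) :
    HasDerivAt (fun y => ∫ t in a..y, f t) (f x) x :=
  integral_hasDerivAt_right ((hf.mono (Icc_subset_Icc_right hx.2.le)).intervalIntegrable_of_Icc
      hx.1.le) ((hf.mono Ioo_subset_Icc_self).stronglyMeasurableAtFilter isOpen_Ioo x hx)
    (hf.continuousAt (Icc_mem_nhds hx.1 hx.2))

lemma hasDerivAt_integral_left_of_continuousOn {f : ℝ → ℝ} {a b x : ℝ}
    (hf : ContinuousOn f (Icc a b)) (hx : x ∈ Ioo a b) :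
    HasDerivAt (fun y => ∫ t in y..b, f t) (-f x) x :=
  integral_hasDerivAt_left ((hf.mono (Icc_subset_Icc_left hx.1.le)).intervalIntegrable_of_Icc
      hx.2.le) ((hf.mono Ioo_subset_Icc_self).stronglyMeasurableAtFilter isOpen_Ioo x hx)
    (hf.continuousAt (Icc_mem_nhds hx.1 hx.2))

lemma eq_mul_exp_of_hasDerivAt_eq_mul {f : ℝ → ℝ} {r t : ℝ} (hf : ContinuousOn f (Ici 0))
    (hderiv : ∀ s > 0, HasDerivAt f (r * f s) s) (ht : 0 ≤ t) : f t = f 0 * exp (r * t) := by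
  set g : ℝ → ℝ := fun s => f s * exp (-(r * s))
  have hg : ∀ s > 0, HasDerivAt g 0 s := fun s hs =>
    ((hderiv s hs).fun_mul ((hasDerivAt_id' s).const_mul r).fun_neg.exp).congr_deriv (by ring)
  rcases ht.eq_or_lt with rfl | ht
  · simp
  have hgc : ContinuousOn g (Icc 0 t) :=
    (hf.mono Icc_subset_Ici_self).mul (by fun_prop)
  obtain ⟨s, hs, hslope⟩ := exists_hasDerivAt_eq_slope g (fun _ => 0) ht hgc fun s hs => hg s hs.1
  have hgt : g t = g 0 := by
    rw [eq_comm, div_eq_zero_iff, sub_eq_zero] at hslope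
    exact hslope.resolve_right (by linarith)
  calc f t = g t * exp (r * t) := by
        simp only [g, mul_assoc, ← exp_add, neg_add_cancel, exp_zero, mul_one]
    _ = f 0 * exp (r * t) := by simp [hgt, g]

lemma tendsto_atTop_of_mul_exp_le {f : ℝ → ℝ} {C r M : ℝ} (hC : 0 < C) (hr : 0 < r) (hM : 0 < M)
    (h : ∀ t, 0 ≤ t → C * exp (r * t) ≤ M * f t) : Tendsto f atTop atTop := by
  refine tendsto_atTop_mono' atTop ((eventually_ge_atTop 0).mono fun t ht => ?_)
    ((tendsto_exp_atTop.comp (tendsto_id.const_mul_atTop hr)).const_mul_atTop (div_pos hC hM))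
  rw [Function.comp_apply, id, div_mul_eq_mul_div, div_le_iff₀' hM]
  exact h t ht

section ParametricIntegral

variable {F F' : ℝ → ℝ → ℝ} {t₀ a b : ℝ}

lemma continuousOn_intervalIntegral_of_continuousOn_prod (hab : a ≤ b)
    (hF : ContinuousOn (uncurry F) (Ici t₀ ×ˢ Icc a b)) :
    ContinuousOn (fun t => ∫ x in a..b, F t x) (Ici t₀) := by
  set G : ℝ → ℝ → ℝ := fun t x => F (max t t₀) (projIcc a b hab x)
  have hG : Continuous (uncurry G) :=
    hF.comp_continuous (f := fun p : ℝ × ℝ => (max p.1 t₀, (projIcc a b hab p.2 : ℝ)))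
      (by fun_prop) fun p => ⟨le_max_right p.1 t₀, (projIcc a b hab p.2).2⟩
  refine (continuous_parametric_intervalIntegral_of_continuous' hG a b).continuousOn.congr
    fun t (ht : t₀ ≤ t) => integral_congr fun x hx => ?_
  rw [uIcc_of_le hab] at hx
  simp [G, max_eq_left ht, projIcc_of_mem hab hx]

lemma hasDerivAt_intervalIntegral_of_continuousOn_prod (hab : a ≤ b)
    (hF : ContinuousOn (uncurry F) (Ici t₀ ×ˢ Icc a b))
    (hF' : ContinuousOn (uncurry F') (Ici t₀ ×ˢ Icc a b))
    (hderiv : ∀ t x, t₀ < t → x ∈ Icc a b → HasDerivAt (F · x) (F' t x) t) {t : ℝ}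
    (ht : t₀ < t) : HasDerivAt (fun t => ∫ x in a..b, F t x) (∫ x in a..b, F' t x) t := by
  set δ := (t - t₀) / 2
  have hδ : 0 < δ := by simp only [δ]; linarith
  have hball : Metric.closedBall t δ ⊆ Ioi t₀ := fun s hs => by
    rw [Metric.mem_closedBall, Real.dist_eq, abs_le] at hs
    simp only [δ, mem_Ioi] at hs ⊢
    linarith
  obtain ⟨C, hC⟩ := ((isCompact_closedBall t δ).prod isCompact_Icc).exists_bound_of_continuousOn
    (hF'.mono (prod_mono (hball.trans Ioi_subset_Ici_self) subset_rfl))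
  have hmem : ∀ x ∈ Ι a b, x ∈ Icc a b := fun x hx => by
    rw [uIoc_of_le hab] at hx
    exact Ioc_subset_Icc_self hx
  have hint : ∀ s, t₀ ≤ s → IntervalIntegrable (F s) volume a b := fun s hs =>
    (hF.uncurry_left s hs).intervalIntegrable_of_Icc hab
  refine (hasDerivAt_integral_of_dominated_loc_of_deriv_le (bound := fun _ => C)
    (Metric.closedBall_mem_nhds t hδ) ?_ (hint t ht.le)
    ((hF'.uncurry_left t ht.le).intervalIntegrable_of_Icc hab).def'.aestronglyMeasurable
    ?_ intervalIntegrable_const ?_).2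
  · filter_upwards [Ioi_mem_nhds ht] with s hs
    exact (hint s (le_of_lt hs)).def'.aestronglyMeasurable
  · exact Eventually.of_forall fun x hx s hs => hC (s, x) ⟨hs, hmem x hx⟩
  · exact Eventually.of_forall fun x hx s hs => hderiv s x (hball hs) (hmem x hx)

end ParametricIntegral

section EulerLotka

variable {w : ℝ → ℝ} {c : ℝ}

lemma norm_mul_exp_neg_mul_le {x r a : ℝ} (hr : 0 ≤ r) (ha : 0 ≤ a) :
    ‖x * exp (-(r * a))‖ ≤ |x| := by
  rw [norm_mul, Real.norm_eq_abs, Real.norm_of_nonneg (exp_pos _).le]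
  exact mul_le_of_le_one_right (abs_nonneg _) (exp_le_one_iff.2 (neg_nonpos.2 (mul_nonneg hr ha)))

lemma continuousOn_integral_mul_exp_neg (hc : 0 ≤ c) (hw : IntervalIntegrable w volume 0 c) :
    ContinuousOn (fun r => ∫ a in (0:ℝ)..c, w a * exp (-(r * a))) (Ici 0) := by
  intro r₀ _
  refine continuousWithinAt_of_dominated_interval (bound := fun a => |w a|)
    (Eventually.of_forall fun r =>
      (hw.mul_continuousOn (by fun_prop)).def'.aestronglyMeasurable) ?_ hw.abs
    (Eventually.of_forall fun a _ => by fun_prop)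
  filter_upwards [self_mem_nhdsWithin] with r (hr : 0 ≤ r)
  refine Eventually.of_forall fun a ha => norm_mul_exp_neg_mul_le hr ?_
  rw [uIoc_of_le hc] at ha
  exact ha.1.le

lemma tendsto_integral_mul_exp_neg_atTop (hc : 0 ≤ c) (hw : IntervalIntegrable w volume 0 c) :
    Tendsto (fun r => ∫ a in (0:ℝ)..c, w a * exp (-(r * a))) atTop (𝓝 0) := by
  have hlim := tendsto_integral_filter_of_dominated_convergence (μ := volume) (a := 0) (b := c)
    (l := atTop) (F := fun r a => w a * exp (-(r * a))) (f := fun _ => 0) (fun a => |w a|)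
    (Eventually.of_forall fun r =>
      (hw.mul_continuousOn (by fun_prop)).def'.aestronglyMeasurable) ?_ hw.abs ?_
  · simpa using hlim
  · filter_upwards [eventually_ge_atTop 0] with r hr
    refine Eventually.of_forall fun a ha => norm_mul_exp_neg_mul_le hr ?_
    rw [uIoc_of_le hc] at ha
    exact ha.1.le
  · refine Eventually.of_forall fun a ha => ?_
    rw [uIoc_of_le hc] at ha
    simpa using (tendsto_exp_neg_atTop_nhds_zero.comp
      (tendsto_id.atTop_mul_const ha.1)).const_mul (w a)

lemma exists_pos_mul_integral_mul_exp_neg_eq_one {k : ℝ} (hc : 0 ≤ c)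
    (hw : IntervalIntegrable w volume 0 c) (hR : 1 < k * ∫ a in (0:ℝ)..c, w a) :
    ∃ r > 0, k * ∫ a in (0:ℝ)..c, w a * exp (-(r * a)) = 1 := by
  set F : ℝ → ℝ := fun r => k * ∫ a in (0:ℝ)..c, w a * exp (-(r * a))
  have hF0 : 1 < F 0 := by simpa [F] using hR
  obtain ⟨r₁, hr₁, hFr₁⟩ : ∃ r₁ ≥ 0, F r₁ < 1 := by
    have hev := ((tendsto_integral_mul_exp_neg_atTop hc hw).const_mul k).eventually
      (gt_mem_nhds (by norm_num : k * 0 < 1))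
    exact ((eventually_ge_atTop 0).and hev).exists
  obtain ⟨r, hr, hFr⟩ := intermediate_value_Icc' hr₁
    (((continuousOn_integral_mul_exp_neg hc hw).const_smul k).mono Icc_subset_Ici_self)
    ⟨hFr₁.le, hF0.le⟩
  exact ⟨r, hr.1.lt_of_ne (by rintro rfl; exact hF0.ne' hFr), hFr⟩

end EulerLotka

noncomputable def netMaternity (μ β : ℝ → ℝ) (a : ℝ) : ℝ :=
  β a * exp (-(∫ s in (0:ℝ)..a, μ s))

/-- Fisher's reproductive value `φ(a) = k ∫ₐᶜ β(s) e^{-∫ₐˢ μ - r (s - a)} ds`: the eigenfunction of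
the adjoint renewal problem for the growth rate `r`. -/
noncomputable def reproductiveValue (μ β : ℝ → ℝ) (c k r a : ℝ) : ℝ :=
  k * exp ((∫ s in (0:ℝ)..a, μ s) + r * a) * ∫ s in a..c, netMaternity μ β s * exp (-(r * s))

section ReproductiveValue

variable {μ β : ℝ → ℝ} {c k r : ℝ}

lemma continuousOn_netMaternity (hc : 0 ≤ c) (hμ : ContinuousOn μ (Icc 0 c))
    (hβ : ContinuousOn β (Icc 0 c)) : ContinuousOn (netMaternity μ β) (Icc 0 c) :=
  hβ.mul (continuousOn_integral_right_of_continuousOn hc hμ).neg.rexp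

lemma netMaternity_nonneg (hβ : ∀ a ∈ Icc 0 c, 0 ≤ β a) {a : ℝ} (ha : a ∈ Icc 0 c) :
    0 ≤ netMaternity μ β a :=
  mul_nonneg (hβ a ha) (exp_pos _).le

lemma reproductiveValue_zero :
    reproductiveValue μ β c k r 0 = k * ∫ a in (0:ℝ)..c, netMaternity μ β a * exp (-(r * a)) := by
  simp [reproductiveValue]

lemma reproductiveValue_self : reproductiveValue μ β c k r c = 0 := by
  simp [reproductiveValue]

lemma continuousOn_reproductiveValue (hc : 0 ≤ c) (hμ : ContinuousOn μ (Icc 0 c))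
    (hβ : ContinuousOn β (Icc 0 c)) : ContinuousOn (reproductiveValue μ β c k r) (Icc 0 c) :=
  (continuousOn_const.mul
      ((continuousOn_integral_right_of_continuousOn hc hμ).add (by fun_prop)).rexp).mul
    (continuousOn_integral_left_of_continuousOn (f := fun s => netMaternity μ β s * exp (-(r * s)))
      hc ((continuousOn_netMaternity hc hμ hβ).mul (by fun_prop)))

lemma hasDerivAt_reproductiveValue (hc : 0 ≤ c) (hμ : ContinuousOn μ (Icc 0 c))
    (hβ : ContinuousOn β (Icc 0 c)) {a : ℝ} (ha : a ∈ Ioo 0 c) :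
    HasDerivAt (reproductiveValue μ β c k r)
      ((μ a + r) * reproductiveValue μ β c k r a - k * β a) a := by
  have hE := ((hasDerivAt_integral_right_of_continuousOn hμ ha).fun_add
    ((hasDerivAt_id' a).const_mul r)).exp
  have hJ := hasDerivAt_integral_left_of_continuousOn
    (f := fun s => netMaternity μ β s * exp (-(r * s)))
    ((continuousOn_netMaternity hc hμ hβ).mul (by fun_prop)) ha
  refine ((hE.const_mul k).fun_mul hJ).congr_deriv ?_
  have hcancel : exp ((∫ s in (0:ℝ)..a, μ s) + r * a) *
      (exp (-(∫ s in (0:ℝ)..a, μ s)) * exp (-(r * a))) = 1 := by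
    rw [← exp_add, ← exp_add, ← exp_zero]
    ring_nf
  simp only [reproductiveValue, netMaternity]
  linear_combination (-(k * β a)) * hcancel

lemma reproductiveValue_nonneg (hk : 0 ≤ k) (hβnn : ∀ a ∈ Icc 0 c, 0 ≤ β a) {a : ℝ}
    (ha : a ∈ Icc 0 c) : 0 ≤ reproductiveValue μ β c k r a :=
  mul_nonneg (by positivity) (integral_nonneg ha.2 fun s hs =>
    mul_nonneg (netMaternity_nonneg hβnn ⟨ha.1.trans hs.1, hs.2⟩) (exp_pos _).le)

lemma reproductiveValue_pos (hμ : ContinuousOn μ (Icc 0 c)) (hβ : ContinuousOn β (Icc 0 c))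
    (hk : 0 < k) (hβnn : ∀ a ∈ Icc 0 c, 0 ≤ β a) {b : ℝ} (hb : b < c)
    (hβpos : ∀ a ∈ Ico b c, 0 < β a) {a : ℝ} (ha : a ∈ Ico 0 c) :
    0 < reproductiveValue μ β c k r a := by
  have hsub : Icc a c ⊆ Icc 0 c := Icc_subset_Icc_left ha.1
  have hx : max a b ∈ Icc a c := ⟨le_max_left _ _, max_le ha.2.le hb.le⟩
  refine mul_pos (by positivity) (intervalIntegral_pos_of_continuousOn ha.2
    (((continuousOn_netMaternity (ha.1.trans ha.2.le) hμ hβ).mono hsub).mul (by fun_prop))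
    (fun s hs => mul_nonneg (netMaternity_nonneg hβnn (hsub hs)) (exp_pos _).le) hx
    (mul_pos (mul_pos (hβpos _ ⟨le_max_right _ _, max_lt ha.2 hb⟩) (exp_pos _)) (exp_pos _)))

end ReproductiveValue

section AgeStructured

variable {μ β φ : ℝ → ℝ} {c k r : ℝ}

lemma integral_mul_timeDeriv_eq_of_adjoint {u ut ua : ℝ → ℝ} (hc : 0 ≤ c)
    (hβ : ContinuousOn β (Icc 0 c)) (hφ : ContinuousOn φ (Icc 0 c))
    (hφ' : ∀ a ∈ Ioo 0 c, HasDerivAt φ ((μ a + r) * φ a - k * β a) a)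
    (hφ0 : φ 0 = 1) (hφc : φ c = 0)
    (hu : ContinuousOn u (Icc 0 c)) (hut : ContinuousOn ut (Icc 0 c))
    (hua : ∀ a ∈ Ioo 0 c, HasDerivAt u (ua a) a)
    (htransport : ∀ a ∈ Ioo 0 c, ut a + ua a = -μ a * u a)
    (hrenewal : u 0 = k * ∫ a in (0:ℝ)..c, β a * u a) :
    ∫ a in (0:ℝ)..c, φ a * ut a = r * ∫ a in (0:ℝ)..c, φ a * u a := by
  have hφu : IntervalIntegrable (fun a => r * (φ a * u a)) volume 0 c :=
    (continuousOn_const.mul (hφ.mul hu)).intervalIntegrable_of_Icc hc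
  have hβu : IntervalIntegrable (fun a => k * (β a * u a)) volume 0 c :=
    (continuousOn_const.mul (hβ.mul hu)).intervalIntegrable_of_Icc hc
  have hφut : IntervalIntegrable (fun a => φ a * ut a) volume 0 c :=
    (hφ.mul hut).intervalIntegrable_of_Icc hc
  have hparts : ∫ a in (0:ℝ)..c, (r * (φ a * u a) - k * (β a * u a) - φ a * ut a) =
      φ c * u c - φ 0 * u 0 := by
    refine integral_eq_sub_of_hasDerivAt_of_le hc (hφ.mul hu) (fun a ha => ?_)
      ((hφu.sub hβu).sub hφut)
    refine ((hφ' a ha).mul (hua a ha)).congr_deriv ?_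
    linear_combination φ a * htransport a ha
  rw [integral_sub (hφu.sub hβu) hφut, integral_sub hφu hβu, intervalIntegral.integral_const_mul,
    intervalIntegral.integral_const_mul, hφc, hφ0, hrenewal] at hparts
  linarith

lemma integral_mul_eq_mul_exp_of_adjoint {v vt va : ℝ → ℝ → ℝ} (hc : 0 ≤ c)
    (hβ : ContinuousOn β (Icc 0 c)) (hφ : ContinuousOn φ (Icc 0 c))
    (hφ' : ∀ a ∈ Ioo 0 c, HasDerivAt φ ((μ a + r) * φ a - k * β a) a)
    (hφ0 : φ 0 = 1) (hφc : φ c = 0)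
    (hvc : ContinuousOn (uncurry v) (Ici 0 ×ˢ Icc 0 c))
    (hvtc : ContinuousOn (uncurry vt) (Ici 0 ×ˢ Icc 0 c))
    (hvt : ∀ t a, 0 ≤ t → a ∈ Icc 0 c → HasDerivWithinAt (v · a) (vt t a) (Ici 0) t)
    (hva : ∀ t a, 0 ≤ t → a ∈ Icc 0 c → HasDerivWithinAt (v t) (va t a) (Icc 0 c) a)
    (hPDE : ∀ t a, 0 ≤ t → a ∈ Icc 0 c → vt t a + va t a = -μ a * v t a)
    (hbc : ∀ t, 0 ≤ t → v t 0 = k * ∫ a in (0:ℝ)..c, β a * v t a) {t : ℝ} (ht : 0 ≤ t) :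
    ∫ a in (0:ℝ)..c, φ a * v t a = (∫ a in (0:ℝ)..c, φ a * v 0 a) * exp (r * t) := by
  have hF : ContinuousOn (uncurry fun t a => φ a * v t a) (Ici 0 ×ˢ Icc 0 c) :=
    (hφ.comp continuousOn_snd fun p hp => hp.2).mul hvc
  have hF' : ContinuousOn (uncurry fun t a => φ a * vt t a) (Ici 0 ×ˢ Icc 0 c) :=
    (hφ.comp continuousOn_snd fun p hp => hp.2).mul hvtc
  refine eq_mul_exp_of_hasDerivAt_eq_mul (continuousOn_intervalIntegral_of_continuousOn_prod hc hF)
    (fun s hs => ?_) ht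
  rw [← integral_mul_timeDeriv_eq_of_adjoint hc hβ hφ hφ' hφ0 hφc (hvc.uncurry_left s hs.le)
    (hvtc.uncurry_left s hs.le)
    (fun a ha => (hva s a hs.le (Ioo_subset_Icc_self ha)).hasDerivAt (Icc_mem_nhds ha.1 ha.2))
    (fun a ha => hPDE s a hs.le (Ioo_subset_Icc_self ha)) (hbc s hs.le)]
  exact hasDerivAt_intervalIntegral_of_continuousOn_prod hc hF hF'
    (fun s a hs ha => ((hvt s a hs.le ha).hasDerivAt (Ici_mem_nhds hs)).const_mul (φ a)) hs

end AgeStructured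

theorem supercritical_renewal_blowup_general (c k bl : ℝ)
    (μ β : ℝ → ℝ)
    (hμc : ContinuousOn μ (Icc 0 c)) (hβc : ContinuousOn β (Icc 0 c))
    (hβnn : ∀ a ∈ Icc (0:ℝ) c, 0 ≤ β a)
    (hbl : bl ∈ Ico (0:ℝ) c) (hβpos : ∀ a ∈ Ico bl c, 0 < β a)
    (hR : 1 < k * ∫ a in (0:ℝ)..c, β a * Real.exp (-(∫ s in (0:ℝ)..a, μ s)))
    (v vt va : ℝ → ℝ → ℝ)
    (hvc : ContinuousOn (fun p : ℝ × ℝ => v p.1 p.2) (Ici 0 ×ˢ Icc 0 c))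
    (hvtc : ContinuousOn (fun p : ℝ × ℝ => vt p.1 p.2) (Ici 0 ×ˢ Icc 0 c))
    (hvt : ∀ t a, 0 ≤ t → a ∈ Icc (0:ℝ) c →
      HasDerivWithinAt (fun τ => v τ a) (vt t a) (Ici 0) t)
    (hva : ∀ t a, 0 ≤ t → a ∈ Icc (0:ℝ) c →
      HasDerivWithinAt (fun α => v t α) (va t a) (Icc 0 c) a)
    (hvnn : ∀ t a, 0 ≤ t → a ∈ Icc (0:ℝ) c → 0 ≤ v t a)
    (hPDE : ∀ t a, 0 ≤ t → a ∈ Icc (0:ℝ) c → vt t a + va t a = -(μ a) * v t a)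
    (hbc : ∀ t, 0 ≤ t → v t 0 = k * ∫ a in (0:ℝ)..c, β a * v t a)
    (hv0 : ∃ a ∈ Icc (0:ℝ) c, v 0 a ≠ 0) :
    Tendsto (fun t => ∫ a in (0:ℝ)..c, v t a) atTop atTop := by
  have hc : 0 < c := hbl.1.trans_lt hbl.2
  have hk : 0 < k := pos_of_mul_pos_left (one_pos.trans hR)
    (integral_nonneg hc.le fun a ha => netMaternity_nonneg hβnn ha)
  obtain ⟨r, hr, hEL⟩ := exists_pos_mul_integral_mul_exp_neg_eq_one hc.le
    ((continuousOn_netMaternity hc.le hμc hβc).intervalIntegrable_of_Icc hc.le) hR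
  set φ := reproductiveValue μ β c k r
  have hφ : ContinuousOn φ (Icc 0 c) := continuousOn_reproductiveValue hc.le hμc hβc
  set Q : ℝ → ℝ := fun t => ∫ a in (0:ℝ)..c, φ a * v t a
  have hQ : ∀ t, 0 ≤ t → Q t = Q 0 * exp (r * t) := fun t =>
    integral_mul_eq_mul_exp_of_adjoint hc.le hβc hφ
      (fun a => hasDerivAt_reproductiveValue hc.le hμc hβc)
      (reproductiveValue_zero.trans hEL) reproductiveValue_self hvc hvtc hvt hva hPDE hbc
  have hQ0 : 0 < Q 0 := by
    obtain ⟨a₀, ha₀, hva₀⟩ := hv0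
    exact intervalIntegral_mul_pos_of_continuousOn hc hφ (hvc.uncurry_left 0 le_rfl)
      (fun a => reproductiveValue_nonneg hk.le hβnn)
      (fun a ha => reproductiveValue_pos hμc hβc hk hβnn hbl.2 hβpos (Ioo_subset_Ico_self ha))
      (fun a => hvnn 0 a le_rfl) ha₀ ((hvnn 0 a₀ le_rfl ha₀).lt_of_ne' hva₀)
  obtain ⟨M, hM0, hM⟩ := exists_pos_integral_mul_le_mul_integral hc.le hφ
  refine tendsto_atTop_of_mul_exp_le hQ0 hr hM0 fun t ht => ?_
  rw [← hQ t ht]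
  exact hM _ (hvc.uncurry_left t ht) fun a => hvnn t a ht

/-- **Unbounded growth of a supercritical linear age-structured population on
a bounded age interval (Lemma 4.3).** If the renewal reproduction number
`k ∫_0^c β(a) exp(-∫_0^a μ) da` exceeds `1` and the initial datum is not
identically zero, then the total population `∫_0^c v(t,a) da` tends to `∞`. -/
theorem supercritical_renewal_blowup (c k bl : ℝ) (hc : 0 < c) (hk : 0 < k)
    (μ β : ℝ → ℝ)
    (hμc : ContinuousOn μ (Icc 0 c)) (hβc : ContinuousOn β (Icc 0 c))
    (hμnn : ∀ a ∈ Icc (0:ℝ) c, 0 ≤ μ a) (hβnn : ∀ a ∈ Icc (0:ℝ) c, 0 ≤ β a)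
    (hbl : bl ∈ Ico (0:ℝ) c) (hβpos : ∀ a ∈ Ico bl c, 0 < β a)
    (hR : 1 < k * ∫ a in (0:ℝ)..c, β a * Real.exp (-(∫ s in (0:ℝ)..a, μ s)))
    (v vt va : ℝ → ℝ → ℝ)
    (hvc : ContinuousOn (fun p : ℝ × ℝ => v p.1 p.2) (Ici 0 ×ˢ Icc 0 c))
    (hvtc : ContinuousOn (fun p : ℝ × ℝ => vt p.1 p.2) (Ici 0 ×ˢ Icc 0 c))
    (hvac : ContinuousOn (fun p : ℝ × ℝ => va p.1 p.2) (Ici 0 ×ˢ Icc 0 c))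
    (hvt : ∀ t a, 0 ≤ t → a ∈ Icc (0:ℝ) c →
      HasDerivWithinAt (fun τ => v τ a) (vt t a) (Ici 0) t)
    (hva : ∀ t a, 0 ≤ t → a ∈ Icc (0:ℝ) c →
      HasDerivWithinAt (fun α => v t α) (va t a) (Icc 0 c) a)
    (hvnn : ∀ t a, 0 ≤ t → a ∈ Icc (0:ℝ) c → 0 ≤ v t a)
    (hPDE : ∀ t a, 0 ≤ t → a ∈ Icc (0:ℝ) c → vt t a + va t a = -(μ a) * v t a)
    (hbc : ∀ t, 0 ≤ t → v t 0 = k * ∫ a in (0:ℝ)..c, β a * v t a)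
    (hv0 : ∃ a ∈ Icc (0:ℝ) c, v 0 a ≠ 0) :
    Tendsto (fun t => ∫ a in (0:ℝ)..c, v t a) atTop atTop :=
  supercritical_renewal_blowup_general c k bl μ β hμc hβc hβnn hbl hβpos hR v vt va hvc hvtc hvt hva
    hvnn hPDE hbc hv0
end
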